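/- Let d ≥ 3, let α₁, …, α_d ∈ ℂ[x] be nonzero polynomials with deg α₁ > deg α₂ ≥ deg α_j for all 3 ≤ j ≤ d, let n ≥ 1 and let m be an integer with m > deg α₁. Suppose γ ∈ ℂ[x] satisfies γ^m = α₁ⁿ, and suppose h ∈ ℂ[x] and d₁, …, d_d ∈ ℂ satisfy α₁ⁿ·h = γ·(d₁·α₁ⁿ + d₂·α₂ⁿ + ⋯ + d_d·α_dⁿ). Then d₂·α₂ⁿ + ⋯ + d_d·α_dⁿ = 0 and h = d₁·γ. -/
import Mathlib


/-- **Key step of the linearly dependent case for order `d ≥ 3`.**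
Let `d ≥ 3`, `α i ∈ ℂ[x]` nonzero with `deg α₀ > deg α₁ ≥ deg α_j` for `2 ≤ j` (0-based
indexing), `n ≥ 1`, `m > deg α₀`.  If `γ^m = α₀^n` and
`α₀^n · h = γ · (d₀·α₀^n + d₁·α₁^n + ⋯ + d_{d-1}·α_{d-1}^n)`, then
`d₁·α₁^n + ⋯ + d_{d-1}·α_{d-1}^n = 0` and `h = d₀·γ`. -/
theorem stmt9 (d : ℕ) (hd : 3 ≤ d)
    (α : Fin d → Polynomial ℂ) (hα : ∀ i, α i ≠ 0)
    (hdeg12 : (α ⟨1, by omega⟩).natDegree < (α ⟨0, by omega⟩).natDegree)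
    (hdegrest : ∀ j : Fin d, 2 ≤ (j : ℕ) → (α j).natDegree ≤ (α ⟨1, by omega⟩).natDegree)
    (n : ℕ) (hn : 1 ≤ n) (m : ℕ) (hm : (α ⟨0, by omega⟩).natDegree < m)
    (γ : Polynomial ℂ) (hγ : γ ^ m = (α ⟨0, by omega⟩) ^ n)
    (h : Polynomial ℂ) (dd : Fin d → ℂ)
    (heq : (α ⟨0, by omega⟩) ^ n * h = γ * ∑ i, Polynomial.C (dd i) * (α i) ^ n) :
    (∑ i ∈ Finset.univ.erase (⟨0, by omega⟩ : Fin d),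
        Polynomial.C (dd i) * (α i) ^ n = 0) ∧
      h = Polynomial.C (dd ⟨0, by omega⟩) * γ := by
  have h03 : (0:ℕ) < d := by omega
  set i0 : Fin d := ⟨0, by omega⟩ with hi0
  set i1 : Fin d := ⟨1, by omega⟩ with hi1
  set S : Polynomial ℂ := ∑ i ∈ Finset.univ.erase i0,
      Polynomial.C (dd i) * (α i) ^ n with hSdef
  have ha0n : (α i0) ^ n ≠ 0 := pow_ne_zero _ (hα _)
  have hγ0 : γ ≠ 0 := by
    intro hz
    rw [hz, zero_pow (by omega : m ≠ 0)] at hγ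
    exact ha0n hγ.symm
  have hdegγ : m * γ.natDegree = n * (α i0).natDegree := by
    have := congrArg Polynomial.natDegree hγ
    simpa [Polynomial.natDegree_pow] using this
  have hd0pos : 1 ≤ (α i0).natDegree := by omega
  have hγlt : γ.natDegree < n := by
    nlinarith [hdegγ, hm, hn]
  have hS : S.natDegree ≤ n * (α i1).natDegree := by
    apply Polynomial.natDegree_sum_le_of_forall_le
    intro i hi
    have hine : i ≠ i0 := (Finset.mem_erase.mp hi).1
    have hiv : (i : ℕ) ≠ 0 := by
      intro hv
      exact hine (Fin.ext hv)
    have hdle : (α i).natDegree ≤ (α i1).natDegree := by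
      by_cases h1 : (i : ℕ) = 1
      · have : i = i1 := Fin.ext h1
        rw [this]
      · exact hdegrest i (by omega)
    calc (Polynomial.C (dd i) * α i ^ n).natDegree
        ≤ (Polynomial.C (dd i)).natDegree + (α i ^ n).natDegree :=
          Polynomial.natDegree_mul_le
      _ ≤ n * (α i).natDegree := by
          simp [Polynomial.natDegree_pow]
      _ ≤ n * (α i1).natDegree := Nat.mul_le_mul_left _ hdle
  have hsplit : ∑ i, Polynomial.C (dd i) * (α i) ^ n
      = Polynomial.C (dd i0) * (α i0) ^ n + S :=
    (Finset.add_sum_erase _ _ (Finset.mem_univ i0)).symm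
  rw [hsplit] at heq
  have key : (α i0) ^ n * (h - Polynomial.C (dd i0) * γ) = γ * S := by
    linear_combination heq
  by_cases hc : h - Polynomial.C (dd i0) * γ = 0
  · have hh : h = Polynomial.C (dd i0) * γ := sub_eq_zero.mp hc
    have hz : γ * S = 0 := by rw [← key, hc, mul_zero]
    exact ⟨(mul_eq_zero.mp hz).resolve_left hγ0, hh⟩
  · exfalso
    have hSne : S ≠ 0 := by
      intro h0
      rw [h0, mul_zero] at key
      exact hc ((mul_eq_zero.mp key).resolve_left ha0n)
    have hdL := Polynomial.natDegree_mul ha0n hc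
    have hdR := Polynomial.natDegree_mul hγ0 hSne
    rw [key, hdR, Polynomial.natDegree_pow] at hdL
    have h12 : (α i1).natDegree + 1 ≤ (α i0).natDegree := hdeg12
    nlinarith [hdL, hS, hγlt, hn]
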